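/- Let θ : ℂ → ℂ be continuously differentiable in the real sense with ‖Dθ(ξ)‖ ≤ K for all ξ ∈ ℂ, and let C* > 0. Then W is Gateaux differentiable as a map from H to H with derivative W′: for all w, z : ℤ³\{0} → ℂ³ with Σ_{j≠0}|w_j|² < ∞ and Σ_{j≠0}|z_j|² < ∞, one has lim_{ε→0} Σ_{j≠0} |ε⁻¹(W(w+εz)_j − W(w)_j) − (W′(w)z)_j|² = 0. -/

import Mathlib

noncomputable section

/-- Squared Euclidean norm `|j|²` on `ℤ³`. -/
def znormSq (j : Fin 3 → ℤ) : ℝ := ∑ i, ((j i : ℝ))^2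

/-- Euclidean norm `|j|` on `ℤ³`. -/
def znorm (j : Fin 3 → ℤ) : ℝ := Real.sqrt (znormSq j)

/-- Squared Euclidean norm `|x|² = Σ_k |x^k|²` of a vector `x ∈ ℂ³`. -/
def vnormSq (x : Fin 3 → ℂ) : ℝ := ∑ i, ‖x i‖ ^ 2

/-- The Leray projector matrix `P_j = Id − |j|⁻² j jᵀ` acting on `ℂ³`. -/
def leray (j : Fin 3 → ℤ) (x : Fin 3 → ℂ) : Fin 3 → ℂ :=
  fun i => x i - ((∑ k, (j k : ℂ) * x k) / ((znormSq j : ℝ) : ℂ)) * (j i : ℂ)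

/-- The truncation map `W`, defined coefficientwise by
`W(w)_j = (C*/|j|³) P_j θ⃗(|j|³ w_j / C*)`. -/
def Wmap (θ : ℂ → ℂ) (Cs : ℝ) (w : (Fin 3 → ℤ) → (Fin 3 → ℂ)) (j : Fin 3 → ℤ) :
    Fin 3 → ℂ :=
  fun i => ((Cs / (znorm j) ^ 3 : ℝ) : ℂ) *
    leray j (fun k => θ ((((znorm j) ^ 3 / Cs : ℝ) : ℂ) * w j k)) i

/-- The derivative of the truncation map,
`(W′(w)z)_j = P_j Dθ⃗(|j|³ w_j / C*)[z_j]`. -/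
def Wderiv (θ : ℂ → ℂ) (Cs : ℝ) (w z : (Fin 3 → ℤ) → (Fin 3 → ℂ)) (j : Fin 3 → ℤ) :
    Fin 3 → ℂ :=
  leray j (fun k => fderiv ℝ θ ((((znorm j) ^ 3 / Cs : ℝ) : ℂ) * w j k) (z j k))

open Topology

/-!
Coefficientwise, `W(w)_j = P_j θ_c⃗(w_j)` for the rescaled profile `θ_c(y) = c⁻¹ θ(c y)` with
`c = |j|³/C*`, whose derivative `Dθ_c(y) = Dθ(c y)` is again bounded by `K`. Hence the `j`-th
term of the series is `|P_j e_ε|²`, where `e_ε` is the error of a difference quotient of `θ_c`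
at `w_j` in direction `z_j`. Each term tends to `0`, and by the mean value inequality and
`‖P_j‖ ≤ 1` (it is an orthogonal projection) it is bounded by `4K²|z_j|²` uniformly in `ε`, so
dominated convergence for series (Tannery's theorem) concludes.
-/

open Filter

section SlopeError

variable {E F : Type*} [NormedAddCommGroup E] [NormedSpace ℝ E]
  [NormedAddCommGroup F] [NormedSpace ℝ F]

theorem HasFDerivAt.tendsto_slope_sub {f : E → F} {f' : E →L[ℝ] F} {x : E}
    (hf : HasFDerivAt f f' x) (v : E) :
    Tendsto (fun t : ℝ => t⁻¹ • (f (x + t • v) - f x) - f' v) (𝓝[≠] 0) (𝓝 0) := by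
  simpa using (hf.hasLineDerivAt v).tendsto_slope_zero.sub_const (f' v)

theorem norm_slope_sub_le {f : E → F} {f' : E → E →L[ℝ] F} {K : ℝ}
    (hf : ∀ y, HasFDerivAt f (f' y) y) (hK : ∀ y, ‖f' y‖ ≤ K) (x v : E) (t : ℝ) :
    ‖t⁻¹ • (f (x + t • v) - f x) - f' x v‖ ≤ 2 * K * ‖v‖ := by
  have hK0 : 0 ≤ K := (norm_nonneg _).trans (hK x)
  have hmvt : ‖f (x + t • v) - f x‖ ≤ K * ‖t • v‖ := by
    simpa using convex_univ.norm_image_sub_le_of_norm_hasFDerivWithin_le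
      (fun y _ => (hf y).hasFDerivWithinAt) (fun y _ => hK y) (Set.mem_univ x)
      (Set.mem_univ (x + t • v))
  have hquot : ‖t⁻¹ • (f (x + t • v) - f x)‖ ≤ K * ‖v‖ := by
    rw [norm_smul] at hmvt ⊢
    calc ‖t⁻¹‖ * ‖f (x + t • v) - f x‖ ≤ ‖t⁻¹‖ * (K * (‖t‖ * ‖v‖)) := by gcongr
      _ = (‖t⁻¹‖ * ‖t‖) * (K * ‖v‖) := by ring
      _ ≤ K * ‖v‖ := mul_le_of_le_one_left (by positivity)
          (by rw [norm_inv]; exact inv_mul_le_one_of_le₀ le_rfl (norm_nonneg t))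
  calc ‖t⁻¹ • (f (x + t • v) - f x) - f' x v‖
      ≤ ‖t⁻¹ • (f (x + t • v) - f x)‖ + ‖f' x v‖ := norm_sub_le _ _
    _ ≤ K * ‖v‖ + K * ‖v‖ := add_le_add hquot ((f' x).le_of_opNorm_le (hK x) v)
    _ = 2 * K * ‖v‖ := by ring

def rescale (f : E → F) (c : ℝ) (y : E) : F := c⁻¹ • f (c • y)

theorem HasFDerivAt.rescale {f : E → F} {f' : E →L[ℝ] F} {c : ℝ} {y : E}
    (hf : HasFDerivAt f f' (c • y)) (hc : c ≠ 0) : HasFDerivAt (rescale f c) f' y := by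
  have h := (hf.comp y ((hasFDerivAt_id y).const_smul c)).const_smul c⁻¹
  rwa [show c⁻¹ • f'.comp (c • ContinuousLinearMap.id ℝ E) = f' by ext; simp [hc]] at h

end SlopeError

theorem continuous_vnormSq : Continuous vnormSq := by
  unfold vnormSq; fun_prop

theorem vnormSq_zero : vnormSq 0 = 0 := by
  simp [vnormSq]

theorem vnormSq_nonneg (x : Fin 3 → ℂ) : 0 ≤ vnormSq x := by
  unfold vnormSq; positivity

theorem vnormSq_le_of_norm_le {x y : Fin 3 → ℂ} {a : ℝ} (h : ∀ k, ‖x k‖ ≤ a * ‖y k‖) :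
    vnormSq x ≤ a ^ 2 * vnormSq y := by
  rw [vnormSq, vnormSq, Finset.mul_sum]
  gcongr with k
  rw [← mul_pow]
  exact pow_le_pow_left₀ (norm_nonneg _) (h k) 2

def latticeVec (j : Fin 3 → ℤ) : EuclideanSpace ℂ (Fin 3) := WithLp.toLp 2 (fun k => (j k : ℂ))

theorem vnormSq_eq_norm_sq (x : Fin 3 → ℂ) : vnormSq x = ‖WithLp.toLp 2 x‖ ^ 2 := by
  simp [vnormSq, EuclideanSpace.norm_sq_eq]

theorem norm_latticeVec_sq (j : Fin 3 → ℤ) : ‖latticeVec j‖ ^ 2 = znormSq j := by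
  simp [latticeVec, EuclideanSpace.norm_sq_eq, znormSq]

theorem toLp_leray_eq_starProjection (j : Fin 3 → ℤ) (x : Fin 3 → ℂ) :
    WithLp.toLp 2 (leray j x) = (ℂ ∙ latticeVec j)ᗮ.starProjection (WithLp.toLp 2 x) := by
  rw [Submodule.starProjection_orthogonal, sub_apply, Submodule.starProjection_singleton,
    norm_latticeVec_sq]
  ext i
  simp [leray, latticeVec, PiLp.inner_apply, mul_comm]

theorem vnormSq_leray_le (j : Fin 3 → ℤ) (x : Fin 3 → ℂ) : vnormSq (leray j x) ≤ vnormSq x := by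
  rw [vnormSq_eq_norm_sq, vnormSq_eq_norm_sq, toLp_leray_eq_starProjection]
  gcongr
  exact Submodule.norm_starProjection_apply_le _ _

theorem continuous_leray (j : Fin 3 → ℤ) : Continuous (leray j) := by
  unfold leray; fun_prop

theorem leray_zero (j : Fin 3 → ℤ) : leray j 0 = 0 := by
  ext i
  simp [leray]

theorem leray_sub (j : Fin 3 → ℤ) (x y : Fin 3 → ℂ) :
    leray j (x - y) = leray j x - leray j y := by
  ext i
  simp only [leray, Pi.sub_apply, mul_sub, Finset.sum_sub_distrib]
  ring

theorem leray_smul (j : Fin 3 → ℤ) (a : ℂ) (x : Fin 3 → ℂ) :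
    leray j (a • x) = a • leray j x := by
  ext i
  simp only [leray, Pi.smul_apply, smul_eq_mul, mul_left_comm _ a, ← Finset.mul_sum]
  ring

theorem znorm_pos {j : Fin 3 → ℤ} (hj : j ≠ 0) : 0 < znorm j := by
  obtain ⟨i, hi⟩ := Function.ne_iff.mp hj
  refine Real.sqrt_pos.mpr (Finset.sum_pos' (fun k _ => sq_nonneg _) ⟨i, Finset.mem_univ _, ?_⟩)
  have hi' : (j i : ℝ) ≠ 0 := by exact_mod_cast hi
  positivity

theorem Wderiv_eq_leray (θ : ℂ → ℂ) (Cs : ℝ) (w z : (Fin 3 → ℤ) → (Fin 3 → ℂ))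
    (j : Fin 3 → ℤ) :
    Wderiv θ Cs w z j = leray j (fun k => fderiv ℝ θ ((znorm j ^ 3 / Cs) • w j k) (z j k)) := by
  simp only [Wderiv, Complex.real_smul]

theorem Wmap_eq_leray_rescale (θ : ℂ → ℂ) (Cs : ℝ) (w : (Fin 3 → ℤ) → (Fin 3 → ℂ))
    (j : Fin 3 → ℤ) :
    Wmap θ Cs w j = leray j (fun k => rescale θ (znorm j ^ 3 / Cs) (w j k)) := by
  have h : (fun k => rescale θ (znorm j ^ 3 / Cs) (w j k))
      = ((Cs / znorm j ^ 3 : ℝ) : ℂ) • fun k => θ (((znorm j ^ 3 / Cs : ℝ) : ℂ) * w j k) := by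
    ext k
    simp only [rescale, inv_div, Complex.real_smul, Pi.smul_apply, smul_eq_mul]
  rw [h, leray_smul]
  rfl

theorem slope_Wmap_sub_Wderiv (θ : ℂ → ℂ) (Cs : ℝ) (w z : (Fin 3 → ℤ) → (Fin 3 → ℂ)) (ε : ℝ)
    (j : Fin 3 → ℤ) :
    (fun i => ((ε⁻¹ : ℝ) : ℂ) * (Wmap θ Cs (w + ε • z) j i - Wmap θ Cs w j i) -
        Wderiv θ Cs w z j i) =
      leray j (fun k => ε⁻¹ • (rescale θ (znorm j ^ 3 / Cs) (w j k + ε • z j k) -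
          rescale θ (znorm j ^ 3 / Cs) (w j k)) -
        fderiv ℝ θ ((znorm j ^ 3 / Cs) • w j k) (z j k)) := by
  set c := znorm j ^ 3 / Cs
  have h : (fun k => ε⁻¹ • (rescale θ c (w j k + ε • z j k) - rescale θ c (w j k)) -
      fderiv ℝ θ (c • w j k) (z j k)) =
      ((ε⁻¹ : ℝ) : ℂ) • ((fun k => rescale θ c ((w + ε • z) j k)) -
        fun k => rescale θ c (w j k)) - fun k => fderiv ℝ θ (c • w j k) (z j k) := by
    ext k
    simp [Complex.real_smul]
  rw [h, leray_sub, leray_smul, leray_sub, Wmap_eq_leray_rescale, Wmap_eq_leray_rescale,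
    Wderiv_eq_leray]
  rfl

theorem Wmap_gateaux_differentiable_general (θ : ℂ → ℂ) (K : ℝ) (hsmooth : ContDiff ℝ 1 θ)
    (hbd : ∀ ξ : ℂ, ‖fderiv ℝ θ ξ‖ ≤ K) (Cs : ℝ) (hCs : 0 < Cs)
    (w z : (Fin 3 → ℤ) → (Fin 3 → ℂ))
    (hz : Summable (fun j : {j : Fin 3 → ℤ // j ≠ 0} => vnormSq (z j.1))) :
    Filter.Tendsto
      (fun ε : ℝ => ∑' j : {j : Fin 3 → ℤ // j ≠ 0},
        vnormSq (fun i =>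
          ((ε⁻¹ : ℝ) : ℂ) * (Wmap θ Cs (w + ε • z) j.1 i - Wmap θ Cs w j.1 i) -
            Wderiv θ Cs w z j.1 i))
      (𝓝[≠] (0 : ℝ)) (𝓝 0) := by
  have hrescale (j : {j : Fin 3 → ℤ // j ≠ 0}) (y : ℂ) :
      HasFDerivAt (rescale θ (znorm j ^ 3 / Cs)) (fderiv ℝ θ ((znorm j ^ 3 / Cs) • y)) y :=
    ((hsmooth.differentiable one_ne_zero _).hasFDerivAt).rescale
      (by have := znorm_pos j.2; positivity)
  simp_rw [slope_Wmap_sub_Wderiv]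
  have hpointwise (j : {j : Fin 3 → ℤ // j ≠ 0}) :=
    ((continuous_vnormSq.comp (continuous_leray j)).tendsto 0).comp
      (tendsto_pi_nhds.mpr fun k => (hrescale j (w j k)).tendsto_slope_sub (z j k))
  have hbound (ε : ℝ) (j : {j : Fin 3 → ℤ // j ≠ 0}) := (vnormSq_leray_le j _).trans
    (vnormSq_le_of_norm_le fun k =>
      norm_slope_sub_le (hrescale j) (fun _ => hbd _) (w j k) (z j k) ε)
  have hlim := tendsto_tsum_of_dominated_convergence (hz.mul_left ((2 * K) ^ 2)) hpointwise
    (.of_forall fun ε j => (Real.norm_of_nonneg (vnormSq_nonneg _)).trans_le (hbound ε j))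
  simpa [leray_zero, vnormSq_zero] using hlim

/-- Gateaux differentiability of the truncation map `W : H → H` with derivative `W′`:
if `θ` is `C¹` in the real sense with `‖Dθ(ξ)‖ ≤ K` everywhere, then for all square
summable families `w, z` one has
`lim_{ε→0} Σ_{j≠0} |ε⁻¹ (W(w+εz)_j − W(w)_j) − (W′(w)z)_j|² = 0`. -/
theorem Wmap_gateaux_differentiable (θ : ℂ → ℂ) (K : ℝ) (hsmooth : ContDiff ℝ 1 θ)
    (hbd : ∀ ξ : ℂ, ‖fderiv ℝ θ ξ‖ ≤ K) (Cs : ℝ) (hCs : 0 < Cs)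
    (w z : (Fin 3 → ℤ) → (Fin 3 → ℂ))
    (hw : Summable (fun j : {j : Fin 3 → ℤ // j ≠ 0} => vnormSq (w j.1)))
    (hz : Summable (fun j : {j : Fin 3 → ℤ // j ≠ 0} => vnormSq (z j.1))) :
    Filter.Tendsto
      (fun ε : ℝ => ∑' j : {j : Fin 3 → ℤ // j ≠ 0},
        vnormSq (fun i =>
          ((ε⁻¹ : ℝ) : ℂ) * (Wmap θ Cs (w + ε • z) j.1 i - Wmap θ Cs w j.1 i) -
            Wderiv θ Cs w z j.1 i))
      (𝓝[≠] (0 : ℝ)) (𝓝 0) :=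
  Wmap_gateaux_differentiable_general θ K hsmooth hbd Cs hCs w z hz

end
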